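/- Let H be a bipartite graph with t vertices whose minimal vertex cover has size q, let V_1,…,V_t be a partition of {1,…,n}, and let R' be the matrix with R'(A,B) = R_H(A,B) whenever A ∩ B = ∅, a_i ∈ V_i for all i, and b_j ∈ V_{x+j} for all j, and R'(A,B) = 0 otherwise. For every integer k ≥ 1, the number of sequences (A_1, B_2, A_3, …, A_{2k−1}, B_{2k}), with each A an x-element subset and each B a y-element subset of {1,…,n} and A_{2k+1} := A_1, such that E[∏_{j=1}^{k} R'(A_{2j−1}, B_{2j})·R'(A_{2j+1}, B_{2j})] ≠ 0, is at most (tk)^{2(k−1)q}·n^{(t−q)k+q}. -/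

import Mathlib

/-
If the expectation of the product is nonzero, every pair of vertices occurs an even number of
times among its factors. For an edge `(u_i, v_j)` of `H`, follow the closed walk
`a_1^i, b_1^j, a_2^i, b_2^j, …, a_k^i, b_k^j, a_1^i` in `K_n`, where `a_l^i` is the `i`-th element
of `A_{2l-1}` and `b_l^j` the `j`-th element of `B_{2l}`. The parts `V_1, …, V_t` keep the walks
of different edges of `H` apart, so each of its `2k` steps is traversed at least twice: the walk
has at most `k` distinct edges, hence at most `k + 1` distinct vertices, and the sequences
`(a_l^i)_l` and `(b_l^j)_l` take at most `k + 1` values in total.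

By König's theorem a minimum vertex cover of `H`, of size `q`, can be matched into its complement.
A matched pair of sequences is then determined by the two first-occurrence patterns and at most
`k + 1` values, which leaves `k^(2(k-1)) n^(k+1)` choices; each of the `t - 2q` unmatched vertices
of `H` outside the cover contributes a factor `n^k`.
-/

def sgn (b : Bool) : ℝ := if b then 1 else -1

noncomputable def Pr {n : ℕ} (P : (Sym2 (Fin n) → Bool) → Prop) : ℝ := by
  classical
  exact ((Finset.univ.filter P).card : ℝ) / (Fintype.card (Sym2 (Fin n) → Bool))

noncomputable def Ex {n : ℕ} (f : (Sym2 (Fin n) → Bool) → ℝ) : ℝ :=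
  (∑ g : Sym2 (Fin n) → Bool, f g) / (Fintype.card (Sym2 (Fin n) → Bool))

noncomputable def Rmat {n : ℕ} (g : Sym2 (Fin n) → Bool) : Matrix (Fin n) (Fin n) ℝ :=
  Matrix.of fun i j => if i = j then 0 else sgn (g s(i, j))

def cyc {m : ℕ} (j : Fin m) : Fin m := ⟨((j : ℕ) + 1) % m, Nat.mod_lt _ j.pos⟩

abbrev SubsetsCard (n x : ℕ) := {A : Finset (Fin n) // A.card = x}

def tup {n x : ℕ} (A : SubsetsCard n x) (i : Fin x) : Fin n :=
  (A.1.orderIsoOfFin A.2 i : Fin n)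

noncomputable def RH {n x y : ℕ} (E : Finset (Fin x × Fin y)) (g : Sym2 (Fin n) → Bool) :
    Matrix (SubsetsCard n x) (SubsetsCard n y) ℝ :=
  Matrix.of fun A B =>
    if Disjoint A.1 B.1 then ∏ e ∈ E, sgn (g s(tup A e.1, tup B e.2)) else 0

def IsVertexCover {x y : ℕ} (E : Finset (Fin x × Fin y)) (S : Finset (Fin x ⊕ Fin y)) : Prop :=
  ∀ e ∈ E, Sum.inl e.1 ∈ S ∨ Sum.inr e.2 ∈ S

noncomputable def RHpart {n x y : ℕ} (E : Finset (Fin x × Fin y))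
    (P : (Fin x ⊕ Fin y) → Finset (Fin n)) (g : Sym2 (Fin n) → Bool) :
    Matrix (SubsetsCard n x) (SubsetsCard n y) ℝ :=
  Matrix.of fun A B =>
    if Disjoint A.1 B.1 ∧ (∀ i, tup A i ∈ P (Sum.inl i)) ∧ (∀ j, tup B j ∈ P (Sum.inr j))
    then RH E g A B else 0

open Finset

lemma sgn_not (b : Bool) : sgn (!b) = -sgn b := by cases b <;> simp [sgn]

theorem even_card_filter_of_sum_prod_sgn_ne_zero {α ι : Type*} [Fintype α] [DecidableEq α]
    (F : Finset ι) (e : ι → α) (h : ∑ g : α → Bool, ∏ i ∈ F, sgn (g (e i)) ≠ 0) (a : α) :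
    Even #{i ∈ F | e i = a} := by
  by_contra hodd
  set flip : (α → Bool) → α → Bool := fun g => Function.update g a (!g a)
  have hflip : Function.Involutive flip := fun g => by
    ext b; by_cases hb : b = a <;> simp [flip, hb]
  -- Flipping the sign of the edge `a` flips each of the odd number of factors indexed by its fiber.
  have hneg : ∀ g, ∏ i ∈ F, sgn (flip g (e i)) = -∏ i ∈ F, sgn (g (e i)) := fun g => by
    have hb : ∀ b, sgn (flip g b) = (if b = a then -1 else 1) * sgn (g b) := fun b => by
      by_cases hb : b = a <;> simp [flip, hb, sgn_not]
    rw [prod_congr rfl fun i _ => hb (e i), prod_mul_distrib, prod_ite, prod_const, prod_const_one,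
      (Nat.not_even_iff_odd.1 hodd).neg_one_pow]
    ring
  apply h
  have := hflip.bijective.sum_comp fun g => ∏ i ∈ F, sgn (g (e i))
  simp only [hneg, sum_neg_distrib] at this
  linarith

theorem Finset.prod_range_two_mul_eq_prod_fin {M : Type*} [CommMonoid M] (f : ℕ → M) (k : ℕ) :
    ∏ m ∈ range (2 * k), f m = ∏ j : Fin k, f (2 * j) * f (2 * j + 1) := by
  rw [Fin.prod_univ_eq_prod_range (fun j => f (2 * j) * f (2 * j + 1))]
  induction k with
  | zero => simp
  | succ k ih => rw [Nat.mul_succ, prod_range_succ, prod_range_succ, prod_range_succ, ih, mul_assoc]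

section Walk

variable {V : Type*} [DecidableEq V]

theorem card_image_range_succ_le (z : ℕ → V) (L : ℕ) :
    #((range (L + 1)).image z) ≤ #((range L).image fun m => s(z m, z (m + 1))) + 1 := by
  induction L with
  | zero => simp
  | succ L ih =>
    rw [range_add_one (n := L + 1), image_insert]
    by_cases hv : z (L + 1) ∈ (range (L + 1)).image z
    · rw [insert_eq_self.2 hv]
      exact ih.trans (by gcongr; omega)
    -- A new vertex can only be reached along an edge not seen before.
    · have hnew : s(z L, z (L + 1)) ∉ (range L).image fun m => s(z m, z (m + 1)) := by
        simp only [mem_image, mem_range, not_exists, not_and] at hv ⊢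
        intro m hm he
        rcases Sym2.eq_iff.1 he with ⟨-, h⟩ | ⟨h, -⟩
        · exact hv (m + 1) (by omega) h
        · exact hv m (by omega) h
      have hedges : ((range (L + 1)).image fun m => s(z m, z (m + 1)))
          = insert s(z L, z (L + 1)) ((range L).image fun m => s(z m, z (m + 1))) := by
        rw [range_add_one, image_insert]
      rw [card_insert_of_notMem hv, hedges, card_insert_of_notMem hnew]
      omega

theorem card_image_range_two_mul_le (z : ℕ → V) (k : ℕ)
    (h : ∀ m < 2 * k, 2 ≤ #{m' ∈ range (2 * k) | s(z m', z (m' + 1)) = s(z m, z (m + 1))}) :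
    #((range (2 * k)).image z) ≤ k + 1 := by
  rcases Nat.eq_zero_or_pos k with rfl | hk
  · simp
  have hedges : 2 * #((range (2 * k)).image fun m => s(z m, z (m + 1))) ≤ 2 * k := by
    refine (mul_card_image_le_card _ 2 fun a ha => ?_).trans (card_range _).le
    obtain ⟨m, hm, rfl⟩ := mem_image.1 ha
    exact h m (mem_range.1 hm)
  have hvertices := card_image_range_succ_le z (2 * k - 1)
  rw [Nat.sub_add_cancel (by omega)] at hvertices
  have hmono : #((range (2 * k - 1)).image fun m => s(z m, z (m + 1)))
      ≤ #((range (2 * k)).image fun m => s(z m, z (m + 1))) :=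
    card_le_card (image_subset_image (range_subset_range.2 (by omega)))
  omega

end Walk

section FirstIndex

variable {α : Type*} [DecidableEq α] {k : ℕ}

def firstIdx (u : Fin k → α) (i : Fin k) : Fin k :=
  ({j | u j = u i} : Finset (Fin k)).min' ⟨i, by simp⟩

lemma apply_firstIdx (u : Fin k → α) (i : Fin k) : u (firstIdx u i) = u i :=
  (mem_filter.1 (min'_mem ({j | u j = u i} : Finset (Fin k)) ⟨i, by simp⟩)).2

lemma firstIdx_le_of_apply_eq (u : Fin k → α) {i j : Fin k} (h : u j = u i) :
    firstIdx u i ≤ j :=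
  min'_le _ _ (by simp [h])

lemma firstIdx_firstIdx (u : Fin k → α) (i : Fin k) : firstIdx u (firstIdx u i) = firstIdx u i :=
  le_antisymm (firstIdx_le_of_apply_eq u rfl)
    (firstIdx_le_of_apply_eq u ((apply_firstIdx u _).trans (apply_firstIdx u i)))

lemma firstIdx_of_val_eq_zero (u : Fin k → α) {i : Fin k} (h : (i : ℕ) = 0) : firstIdx u i = i :=
  Fin.ext (by have := Fin.le_def.1 (firstIdx_le_of_apply_eq u (rfl : u i = u i)); omega)

lemma card_firstIdx_fixed (u : Fin k → α) :
    #{i | firstIdx u i = i} = #(univ.image u) := by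
  refine card_nbij u (fun i _ => mem_image_of_mem u (mem_univ i)) (fun i hi j hj hij => ?_)
    (fun a ha => ?_)
  · simp only [coe_filter, mem_univ, true_and, Set.mem_ofPred_eq] at hi hj
    have hij' := firstIdx_le_of_apply_eq u hij.symm
    have hji := firstIdx_le_of_apply_eq u hij
    rw [hi] at hij'
    rw [hj] at hji
    exact le_antisymm hij' hji
  · obtain ⟨i, -, rfl⟩ := mem_image.1 ha
    exact ⟨firstIdx u i, by simp [firstIdx_firstIdx], apply_firstIdx u i⟩

lemma eq_of_firstIdx_eq {u u' : Fin k → α} (h : firstIdx u = firstIdx u')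
    (hfix : ∀ i, firstIdx u i = i → u i = u' i) : u = u' := by
  funext i
  rw [← apply_firstIdx u i, ← apply_firstIdx u' i, ← h, hfix _ (firstIdx_firstIdx u i)]

lemma card_filter_firstIdx_eq_le [Fintype α] (u₀ : Fin k → α) :
    #{u : Fin k → α | firstIdx u = firstIdx u₀} ≤ Fintype.card α ^ #(univ.image u₀) := by
  set F := ({i | firstIdx u₀ i = i} : Finset (Fin k))
  calc #{u : Fin k → α | firstIdx u = firstIdx u₀} ≤ #(univ : Finset (F → α)) := by
        refine card_le_card_of_injOn (fun u i => u i) (fun _ _ => mem_coe.2 (mem_univ _))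
          fun u hu u' hu' huu' => ?_
        simp only [coe_filter, mem_univ, true_and, Set.mem_ofPred_eq] at hu hu'
        exact eq_of_firstIdx_eq (hu.trans hu'.symm) fun i hi =>
          congrFun huu' ⟨i, by simpa [F, ← hu] using hi⟩
    _ = Fintype.card α ^ #(univ.image u₀) := by
        rw [card_univ, Fintype.card_fun, Fintype.card_coe, card_firstIdx_fixed]

/-- `firstIdx u` is determined by its values at `1, …, k - 1`, as it fixes `0`. -/
def firstIdxTail (u : Fin k → α) (i : Fin (k - 1)) : Fin k :=
  firstIdx u ⟨i + 1, by omega⟩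

lemma firstIdx_eq_of_firstIdxTail_eq {u u' : Fin k → α} (h : firstIdxTail u = firstIdxTail u') :
    firstIdx u = firstIdx u' := by
  funext i
  rcases Nat.eq_zero_or_pos i with hi | hi
  · rw [firstIdx_of_val_eq_zero u hi, firstIdx_of_val_eq_zero u' hi]
  · have := congrFun h ⟨i - 1, by omega⟩
    simp only [firstIdxTail, Nat.sub_add_cancel hi] at this
    exact this

theorem card_pairs_card_image_add_le [Fintype α] [Nonempty α] (d : ℕ) :
    #{p : (Fin k → α) × (Fin k → α) | #(univ.image p.1) + #(univ.image p.2) ≤ d}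
      ≤ k ^ (k - 1) * k ^ (k - 1) * Fintype.card α ^ d := by
  set s := ({p | #(univ.image p.1) + #(univ.image p.2) ≤ d} :
    Finset ((Fin k → α) × (Fin k → α)))
  set pattern := fun p : (Fin k → α) × (Fin k → α) => (firstIdxTail p.1, firstIdxTail p.2)
  have hfiber : ∀ b ∈ s.image pattern, #{p ∈ s | pattern p = b} ≤ Fintype.card α ^ d := by
    intro b hb
    obtain ⟨p₀, hp₀, rfl⟩ := mem_image.1 hb
    calc #{p ∈ s | pattern p = pattern p₀}
        ≤ #(({u | firstIdx u = firstIdx p₀.1} : Finset (Fin k → α))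
            ×ˢ ({w | firstIdx w = firstIdx p₀.2} : Finset (Fin k → α))) :=
          card_le_card fun p hp => by
            simp only [mem_filter, pattern, Prod.ext_iff, mem_product, mem_univ, true_and] at hp ⊢
            exact ⟨firstIdx_eq_of_firstIdxTail_eq hp.2.1, firstIdx_eq_of_firstIdxTail_eq hp.2.2⟩
      _ ≤ Fintype.card α ^ #(univ.image p₀.1) * Fintype.card α ^ #(univ.image p₀.2) := by
          rw [card_product]
          exact Nat.mul_le_mul (card_filter_firstIdx_eq_le _) (card_filter_firstIdx_eq_le _)
      _ ≤ Fintype.card α ^ d := by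
          rw [← pow_add]
          exact pow_le_pow_right₀ Fintype.card_pos (mem_filter.1 hp₀).2
  calc #s ≤ Fintype.card α ^ d * #(s.image pattern) := card_le_mul_card_image s _ hfiber
    _ ≤ Fintype.card α ^ d * #(univ : Finset ((Fin (k - 1) → Fin k) × (Fin (k - 1) → Fin k))) :=
        Nat.mul_le_mul_left _ (card_le_univ _)
    _ = k ^ (k - 1) * k ^ (k - 1) * Fintype.card α ^ d := by simp [mul_comm]

end FirstIndex

section Matching

variable {γ : Type*} [Fintype γ] [DecidableEq γ] {S : Finset γ} {m : S → γ}

lemma two_mul_card_le_card_of_injective (hm : Function.Injective m) (hmS : ∀ s, m s ∉ S) :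
    2 * #S ≤ Fintype.card γ := by
  have hdisj : Disjoint S (univ.image m) := disjoint_right.2 fun c hc => by
    obtain ⟨s, -, rfl⟩ := mem_image.1 hc
    exact hmS s
  have := card_le_univ (S ∪ univ.image m)
  rw [card_union_of_disjoint hdisj, card_image_of_injective _ hm, card_univ,
    Fintype.card_coe] at this
  omega

theorem card_filter_forall_pair_mem_le {β : Type*} [Fintype β] [DecidableEq β]
    (hm : Function.Injective m) (hmS : ∀ s, m s ∉ S) (G : Finset (β × β)) :
    #{v : γ → β | ∀ s : S, (v s, v (m s)) ∈ G}
      ≤ #G ^ #S * Fintype.card β ^ (Fintype.card γ - 2 * #S) := by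
  set M := univ.image m
  set R := univ \ (S ∪ M)
  have hR : #R = Fintype.card γ - 2 * #S := by
    rw [card_sdiff_of_subset (subset_univ _), card_univ, card_union_of_disjoint
      (disjoint_right.2 fun c hc => by obtain ⟨s, -, rfl⟩ := mem_image.1 hc; exact hmS s),
      card_image_of_injective _ hm, card_univ, Fintype.card_coe]
    omega
  calc #{v : γ → β | ∀ s : S, (v s, v (m s)) ∈ G}
      ≤ #(Fintype.piFinset (fun _ : S => G) ×ˢ (univ : Finset (R → β))) := by
        refine card_le_card_of_injOn (fun v => (fun s => (v s, v (m s)), fun r => v r))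
          (fun v hv => ?_) fun v _ v' _ hvv' => funext fun c => ?_
        · simpa using (mem_filter.1 hv).2
        simp only [Prod.ext_iff, funext_iff] at hvv'
        by_cases hcS : c ∈ S
        · exact (hvv'.1 ⟨c, hcS⟩).1
        by_cases hcM : c ∈ M
        · obtain ⟨s, -, rfl⟩ := mem_image.1 hcM
          exact (hvv'.1 s).2
        · exact hvv'.2 ⟨c, by simp [R, hcS, hcM]⟩
    _ = #G ^ #S * Fintype.card β ^ (Fintype.card γ - 2 * #S) := by simp [hR]

end Matching

namespace SimpleGraph

variable {V : Type*} [Fintype V] [DecidableEq V] {G : SimpleGraph V} [DecidableRel G.Adj]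
  {S : Finset V}

/-- Trading an independent part `T` of a minimum vertex cover for its outside neighbours gives
another vertex cover. -/
theorem IsVertexCover.card_le_card_biUnion_neighborFinset_sdiff_of_isIndepSet
    (hS : G.IsVertexCover S) (hmin : ∀ S' : Finset V, G.IsVertexCover S' → #S ≤ #S')
    {T : Finset V} (hTS : T ⊆ S) (hT : G.IsIndepSet T) :
    #T ≤ #(T.biUnion (G.neighborFinset ·) \ S) := by
  set N := T.biUnion (G.neighborFinset ·) \ S
  have hcover_of_mem : ∀ v w, G.Adj v w → v ∈ S → v ∈ S \ T ∪ N ∨ w ∈ S \ T ∪ N := by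
    intro v w hvw hv
    by_cases hvT : v ∈ T
    · have hwT : w ∉ T := fun hwT => hT hvT hwT hvw.ne hvw
      by_cases hw : w ∈ S
      · exact .inr (mem_union_left _ (mem_sdiff.2 ⟨hw, hwT⟩))
      · exact .inr (mem_union_right _ (mem_sdiff.2 ⟨mem_biUnion.2 ⟨v, hvT, by simpa⟩, hw⟩))
    · exact .inl (mem_union_left _ (mem_sdiff.2 ⟨hv, hvT⟩))
  have hcover : G.IsVertexCover ↑(S \ T ∪ N) := fun v w hvw => by
    rcases hS hvw with hv | hw
    · exact_mod_cast hcover_of_mem v w hvw hv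
    · exact_mod_cast (hcover_of_mem w v hvw.symm hw).symm
  have h₁ := hmin _ hcover
  have h₂ := card_union_le (S \ T) N
  have h₃ := card_le_card hTS
  rw [card_sdiff_of_subset hTS] at h₂
  omega

theorem IsVertexCover.card_le_card_biUnion_neighborFinset_sdiff_of_coloring
    (c : G.Coloring Bool) (hS : G.IsVertexCover S)
    (hmin : ∀ S' : Finset V, G.IsVertexCover S' → #S ≤ #S') {T : Finset V} (hTS : T ⊆ S) :
    #T ≤ #(T.biUnion (G.neighborFinset ·) \ S) := by
  set part := fun b : Bool => T.filter (c · = b)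
  have hindep : ∀ b, G.IsIndepSet ↑(part b) := fun b v hv w hw _ hvw => by
    simp only [part, coe_filter, Set.mem_ofPred_eq] at hv hw
    exact c.valid hvw (hv.2.trans hw.2.symm)
  have hdisj : Set.PairwiseDisjoint ↑(univ : Finset Bool)
      fun b => (part b).biUnion (G.neighborFinset ·) \ S := by
    intro b _ b' _ hbb'
    rw [Function.onFun]
    refine Finset.disjoint_left.2 fun w hw hw' => ?_
    simp only [part, mem_sdiff, mem_biUnion, mem_filter, mem_neighborFinset] at hw hw'
    obtain ⟨⟨v, ⟨-, rfl⟩, hvw⟩, -⟩ := hw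
    obtain ⟨⟨v', ⟨-, rfl⟩, hvw'⟩, -⟩ := hw'
    have hv := c.valid hvw
    have hv' := c.valid hvw'
    revert hbb' hv hv'
    cases c v <;> cases c v' <;> cases c w <;> decide
  calc #T = ∑ b, #(part b) := card_eq_sum_card_fiberwise fun _ _ => mem_univ _
    _ ≤ ∑ b, #((part b).biUnion (G.neighborFinset ·) \ S) := sum_le_sum fun b _ =>
        hS.card_le_card_biUnion_neighborFinset_sdiff_of_isIndepSet hmin
          ((filter_subset _ _).trans hTS) (hindep b)
    _ = #(univ.biUnion fun b => (part b).biUnion (G.neighborFinset ·) \ S) :=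
        (card_biUnion hdisj).symm
    _ ≤ #(T.biUnion (G.neighborFinset ·) \ S) :=
        card_le_card (biUnion_subset.2 fun b _ =>
          sdiff_subset_sdiff (biUnion_subset_biUnion_of_subset_left _ (filter_subset _ _)) le_rfl)

/-- König's theorem, by Hall's marriage theorem. -/
theorem IsVertexCover.exists_injective_adj (c : G.Coloring Bool) (hS : G.IsVertexCover S)
    (hmin : ∀ S' : Finset V, G.IsVertexCover S' → #S ≤ #S') :
    ∃ m : S → V, Function.Injective m ∧ ∀ s, m s ∉ S ∧ G.Adj s (m s) := by
  suffices hHall : ∀ T : Finset S, #T ≤ #(T.biUnion fun s => G.neighborFinset s \ S) by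
    obtain ⟨m, hinj, hm⟩ := (all_card_le_biUnion_card_iff_exists_injective _).1 hHall
    exact ⟨m, hinj, fun s => by simpa [and_comm] using hm s⟩
  intro T
  calc #T = #(T.map (Function.Embedding.subtype _)) := (card_map _).symm
    _ ≤ #((T.map (Function.Embedding.subtype _)).biUnion (G.neighborFinset ·) \ S) :=
        hS.card_le_card_biUnion_neighborFinset_sdiff_of_coloring c hmin fun v hv => by
          obtain ⟨s, -, rfl⟩ := mem_map.1 hv
          exact s.2
    _ = #(T.biUnion fun s => G.neighborFinset s \ S) := by
        congr 1
        ext w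
        simp [← exists_and_right, and_assoc]

end SimpleGraph

section Bipartite

variable {x y : ℕ}

def bipartiteGraph (E : Finset (Fin x × Fin y)) : SimpleGraph (Fin x ⊕ Fin y) :=
  SimpleGraph.fromRel fun a b => ∃ e ∈ E, a = .inl e.1 ∧ b = .inr e.2

lemma bipartiteGraph_adj {E : Finset (Fin x × Fin y)} {a b : Fin x ⊕ Fin y} :
    (bipartiteGraph E).Adj a b ↔
      ∃ e ∈ E, (a = .inl e.1 ∧ b = .inr e.2) ∨ (a = .inr e.2 ∧ b = .inl e.1) := by
  simp only [bipartiteGraph, SimpleGraph.fromRel_adj]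
  constructor
  · rintro ⟨-, ⟨e, he, h⟩ | ⟨e, he, h⟩⟩
    · exact ⟨e, he, .inl h⟩
    · exact ⟨e, he, .inr h.symm⟩
  · rintro ⟨e, he, ⟨rfl, rfl⟩ | ⟨rfl, rfl⟩⟩
    · exact ⟨Sum.inl_ne_inr, .inl ⟨e, he, rfl, rfl⟩⟩
    · exact ⟨Sum.inr_ne_inl, .inr ⟨e, he, rfl, rfl⟩⟩

lemma isVertexCover_bipartiteGraph_iff (E : Finset (Fin x × Fin y))
    (S : Finset (Fin x ⊕ Fin y)) : (bipartiteGraph E).IsVertexCover ↑S ↔ IsVertexCover E S := by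
  constructor
  · intro h e he
    exact_mod_cast h (bipartiteGraph_adj.2 ⟨e, he, .inl ⟨rfl, rfl⟩⟩)
  · rintro h a b hab
    obtain ⟨e, he, ⟨rfl, rfl⟩ | ⟨rfl, rfl⟩⟩ := bipartiteGraph_adj.1 hab
    · exact_mod_cast h e he
    · exact_mod_cast (h e he).symm

def bipartiteGraphColoring (E : Finset (Fin x × Fin y)) : (bipartiteGraph E).Coloring Bool :=
  SimpleGraph.Coloring.mk Sum.isLeft fun hab => by
    obtain ⟨e, -, ⟨rfl, rfl⟩ | ⟨rfl, rfl⟩⟩ := bipartiteGraph_adj.1 hab <;> simp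

theorem exists_matching_of_isLeast_vertexCover {E : Finset (Fin x × Fin y)} {q : ℕ}
    (hq : IsLeast {m | ∃ S : Finset (Fin x ⊕ Fin y), IsVertexCover E S ∧ #S = m} q) :
    ∃ S : Finset (Fin x ⊕ Fin y), #S = q ∧ ∃ m : S → Fin x ⊕ Fin y,
      Function.Injective m ∧ ∀ s, m s ∉ S ∧ (bipartiteGraph E).Adj s (m s) := by
  classical
  obtain ⟨S, hS, rfl⟩ := hq.1
  refine ⟨S, rfl, ((isVertexCover_bipartiteGraph_iff E S).2 hS).exists_injective_adj
    (bipartiteGraphColoring E) fun S' hS' => ?_⟩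
  exact hq.2 ⟨S', (isVertexCover_bipartiteGraph_iff E S').1 hS', rfl⟩

end Bipartite

section AltWalk

variable {V : Type*} {k : ℕ} [NeZero k]

/-- The closed walk `u 0, w 0, u 1, w 1, …, u (k-1), w (k-1), u 0, …`. -/
def altWalk (u w : Fin k → V) (m : ℕ) : V :=
  if Even m then u (Fin.ofNat k (m / 2)) else w (Fin.ofNat k (m / 2))

lemma cyc_eq_ofNat (j : Fin k) : cyc j = Fin.ofNat k (j + 1) := rfl

variable (u w : Fin k → V) (j : Fin k)

lemma altWalk_two_mul : altWalk u w (2 * j) = u j := by simp [altWalk]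

lemma altWalk_two_mul_add_one : altWalk u w (2 * j + 1) = w j := by
  simp [altWalk, show (2 * (j : ℕ) + 1) / 2 = j by omega]

lemma altWalk_two_mul_add_two : altWalk u w (2 * j + 1 + 1) = u (cyc j) := by
  simp [altWalk, Nat.even_add_one, cyc_eq_ofNat, show (2 * (j : ℕ) + 1 + 1) / 2 = j + 1 by omega]

lemma exists_altWalk_step_eq (m : ℕ) :
    ∃ j j', s(altWalk u w m, altWalk u w (m + 1)) = s(u j, w j') := by
  by_cases hm : Even m
  · exact ⟨Fin.ofNat k (m / 2), Fin.ofNat k ((m + 1) / 2), by simp [altWalk, hm, Nat.even_add_one]⟩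
  · refine ⟨Fin.ofNat k ((m + 1) / 2), Fin.ofNat k (m / 2), ?_⟩
    rw [Sym2.eq_swap]
    simp [altWalk, hm, Nat.even_add_one]

lemma image_range_altWalk [DecidableEq V] :
    (range (2 * k)).image (altWalk u w) = univ.image u ∪ univ.image w := by
  ext v
  simp only [mem_image, mem_range, mem_union, mem_univ, true_and]
  constructor
  · rintro ⟨m, -, rfl⟩
    by_cases hm : Even m
    · exact .inl ⟨Fin.ofNat k (m / 2), by simp [altWalk, hm]⟩
    · exact .inr ⟨Fin.ofNat k (m / 2), by simp [altWalk, hm]⟩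
  · rintro (⟨j, rfl⟩ | ⟨j, rfl⟩)
    · exact ⟨2 * j, by omega, altWalk_two_mul u w j⟩
    · exact ⟨2 * j + 1, by omega, altWalk_two_mul_add_one u w j⟩

end AltWalk

section Placement

variable {n x y k : ℕ} {E : Finset (Fin x × Fin y)} {P : Fin x ⊕ Fin y → Finset (Fin n)}

variable (P) in
/-- The support condition of `RHpart`: `a_i ∈ V_i`, `b_j ∈ V_{x+j}` and `A ∩ B = ∅`. -/
def IsPlaced (A : SubsetsCard n x) (B : SubsetsCard n y) : Prop :=
  Disjoint A.1 B.1 ∧ (∀ i, tup A i ∈ P (.inl i)) ∧ ∀ j, tup B j ∈ P (.inr j)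

lemma RHpart_of_isPlaced {A : SubsetsCard n x} {B : SubsetsCard n y} (h : IsPlaced P A B)
    (g : Sym2 (Fin n) → Bool) : RHpart E P g A B = ∏ e ∈ E, sgn (g s(tup A e.1, tup B e.2)) := by
  simp only [RHpart, RH, Matrix.of_apply, if_pos h.1]
  exact if_pos h

lemma isPlaced_of_Ex_ne_zero {A : Fin k → SubsetsCard n x} {B : Fin k → SubsetsCard n y}
    (h : Ex (fun g => ∏ j, RHpart E P g (A j) (B j) * RHpart E P g (A (cyc j)) (B j)) ≠ 0)
    (j : Fin k) : IsPlaced P (A j) (B j) ∧ IsPlaced P (A (cyc j)) (B j) := by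
  by_contra hj
  refine h (by rw [Ex, sum_eq_zero fun g _ => prod_eq_zero (mem_univ j) ?_, zero_div])
  rcases not_and_or.1 hj with hj | hj
  · simp only [RHpart, Matrix.of_apply, IsPlaced] at hj ⊢
    rw [if_neg hj, zero_mul]
  · simp only [RHpart, Matrix.of_apply, IsPlaced] at hj ⊢
    rw [if_neg hj, mul_zero]

variable [NeZero k] {A : Fin k → SubsetsCard n x} {B : Fin k → SubsetsCard n y}

variable (A B) in
def edgeWalk (e : Fin x × Fin y) : ℕ → Fin n :=
  altWalk (fun j => tup (A j) e.1) (fun j => tup (B j) e.2)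

lemma prod_RHpart_eq_prod_edgeWalk
    (hplaced : ∀ j, IsPlaced P (A j) (B j) ∧ IsPlaced P (A (cyc j)) (B j))
    (g : Sym2 (Fin n) → Bool) :
    ∏ j, RHpart E P g (A j) (B j) * RHpart E P g (A (cyc j)) (B j)
      = ∏ p ∈ range (2 * k) ×ˢ E,
          sgn (g s(edgeWalk A B p.2 p.1, edgeWalk A B p.2 (p.1 + 1))) := by
  rw [prod_product, prod_range_two_mul_eq_prod_fin]
  refine prod_congr rfl fun j _ => ?_
  rw [RHpart_of_isPlaced (hplaced j).1, RHpart_of_isPlaced (hplaced j).2]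
  simp only [edgeWalk, altWalk_two_mul, altWalk_two_mul_add_one, altWalk_two_mul_add_two,
    Sym2.eq_swap (a := tup (B j) _)]

lemma eq_of_edgeWalk_step_eq (hP : ∀ a b, a ≠ b → Disjoint (P a) (P b))
    (hplaced : ∀ j, IsPlaced P (A j) (B j)) {e e' : Fin x × Fin y} {m m' : ℕ}
    (h : s(edgeWalk A B e' m', edgeWalk A B e' (m' + 1))
      = s(edgeWalk A B e m, edgeWalk A B e (m + 1))) :
    e' = e := by
  have hpart : ∀ {v a b}, v ∈ P a → v ∈ P b → a = b := fun ha hb =>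
    by_contra fun hab => Finset.disjoint_left.1 (hP _ _ hab) ha hb
  have hA : ∀ j i, tup (A j) i ∈ P (.inl i) := fun j => (hplaced j).2.1
  have hB : ∀ j i, tup (B j) i ∈ P (.inr i) := fun j => (hplaced j).2.2
  obtain ⟨j, j', hj⟩ :=
    exists_altWalk_step_eq (fun j => tup (A j) e'.1) (fun j => tup (B j) e'.2) m'
  obtain ⟨l, l', hl⟩ := exists_altWalk_step_eq (fun j => tup (A j) e.1) (fun j => tup (B j) e.2) m
  simp only [edgeWalk, hj, hl] at h
  rcases Sym2.eq_iff.1 h with ⟨h₁, h₂⟩ | ⟨h₁, -⟩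
  · exact Prod.ext (Sum.inl.inj (hpart (hA j e'.1) (h₁ ▸ hA l e.1)))
      (Sum.inr.inj (hpart (hB j' e'.2) (h₂ ▸ hB l' e.2)))
  · exact absurd (hpart (hA j e'.1) (h₁ ▸ hB l' e.2)) Sum.inl_ne_inr

/-- Parity of the edge multiplicities forces the closed walk of each edge of `H` to traverse
each of its steps at least twice. -/
theorem card_image_tup_add_card_image_tup_le (hP : ∀ a b, a ≠ b → Disjoint (P a) (P b))
    (hEx : Ex (fun g => ∏ j, RHpart E P g (A j) (B j) * RHpart E P g (A (cyc j)) (B j)) ≠ 0)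
    {e : Fin x × Fin y} (he : e ∈ E) :
    #(univ.image fun j => tup (A j) e.1) + #(univ.image fun j => tup (B j) e.2) ≤ k + 1 := by
  have hplaced := isPlaced_of_Ex_ne_zero hEx
  set W := edgeWalk A B
  set step := fun p : ℕ × (Fin x × Fin y) => s(W p.2 p.1, W p.2 (p.1 + 1))
  have hsum : ∑ g : Sym2 (Fin n) → Bool, ∏ p ∈ range (2 * k) ×ˢ E, sgn (g (step p)) ≠ 0 := by
    simp only [step, W, ← prod_RHpart_eq_prod_edgeWalk hplaced]
    exact (div_ne_zero_iff.1 hEx).1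
  have hmult : ∀ m₀ < 2 * k,
      2 ≤ #{m ∈ range (2 * k) | s(W e m, W e (m + 1)) = s(W e m₀, W e (m₀ + 1))} := by
    intro m₀ hm₀
    obtain ⟨r, hr⟩ := even_card_filter_of_sum_prod_sgn_ne_zero _ step hsum (step (m₀, e))
    have hpos : 0 < #{p ∈ range (2 * k) ×ˢ E | step p = step (m₀, e)} :=
      card_pos.2 ⟨(m₀, e), by simp [hm₀, he]⟩
    have hsub : {p ∈ range (2 * k) ×ˢ E | step p = step (m₀, e)}
        ⊆ {m ∈ range (2 * k) | s(W e m, W e (m + 1)) = s(W e m₀, W e (m₀ + 1))} ×ˢ {e} := by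
      rintro ⟨m, e'⟩ hp
      simp only [mem_filter, mem_product, step] at hp
      obtain rfl := eq_of_edgeWalk_step_eq hP (fun j => (hplaced j).1) hp.2
      exact mem_product.2 ⟨mem_filter.2 ⟨hp.1.1, hp.2⟩, mem_singleton_self _⟩
    have := card_le_card hsub
    rw [card_product, card_singleton, mul_one] at this
    omega
  have hdisj : Disjoint (univ.image fun j => tup (A j) e.1)
      (univ.image fun j => tup (B j) e.2) := by
    simp only [disjoint_left, mem_image, mem_univ, true_and, not_exists]
    rintro _ ⟨j, rfl⟩ j' hj'
    exact disjoint_left.1 (hP _ _ Sum.inl_ne_inr) ((hplaced j).1.2.1 e.1)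
      (hj' ▸ (hplaced j').1.2.2 e.2)
  rw [← card_union_of_disjoint hdisj, ← image_range_altWalk]
  exact card_image_range_two_mul_le (W e) k hmult

end Placement

section Grid

variable {n x y k : ℕ}

lemma range_tup (A : SubsetsCard n x) : Set.range (tup A) = A.1 :=
  A.1.range_orderEmbOfFin A.2

lemma tup_injective : Function.Injective (tup : SubsetsCard n x → Fin x → Fin n) :=
  fun A A' h => Subtype.ext (by exact_mod_cast (range_tup A).symm.trans (h ▸ range_tup A'))

def grid (AB : (Fin k → SubsetsCard n x) × (Fin k → SubsetsCard n y)) :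
    Fin x ⊕ Fin y → Fin k → Fin n :=
  Sum.elim (fun i j => tup (AB.1 j) i) fun i j => tup (AB.2 j) i

lemma grid_injective : Function.Injective (grid : _ → Fin x ⊕ Fin y → Fin k → Fin n) :=
  fun _ _ h => Prod.ext
    (funext fun j => tup_injective (funext fun i => congrFun (congrFun h (.inl i)) j))
    (funext fun j => tup_injective (funext fun i => congrFun (congrFun h (.inr i)) j))

lemma card_image_grid_add_card_image_grid_le [NeZero k] {E : Finset (Fin x × Fin y)}
    {P : Fin x ⊕ Fin y → Finset (Fin n)} (hP : ∀ a b, a ≠ b → Disjoint (P a) (P b))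
    {AB : (Fin k → SubsetsCard n x) × (Fin k → SubsetsCard n y)}
    (hEx : Ex (fun g => ∏ j,
      RHpart E P g (AB.1 j) (AB.2 j) * RHpart E P g (AB.1 (cyc j)) (AB.2 j)) ≠ 0)
    {a b : Fin x ⊕ Fin y} (hab : (bipartiteGraph E).Adj a b) :
    #(univ.image (grid AB a)) + #(univ.image (grid AB b)) ≤ k + 1 := by
  obtain ⟨e, he, ⟨rfl, rfl⟩ | ⟨rfl, rfl⟩⟩ := bipartiteGraph_adj.1 hab
  · exact card_image_tup_add_card_image_tup_le hP hEx he
  · exact (add_comm _ _).trans_le (card_image_tup_add_card_image_tup_le hP hEx he)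

end Grid

lemma pow_mul_pow_le_of_two_mul_le {n k q t : ℕ} (h : 2 * q ≤ t) :
    (k ^ (k - 1) * k ^ (k - 1) * n ^ (k + 1)) ^ q * (n ^ k) ^ (t - 2 * q)
      ≤ (t * k) ^ (2 * (k - 1) * q) * n ^ ((t - q) * k + q) := by
  obtain ⟨b, rfl⟩ := Nat.exists_eq_add_of_le h
  have hexp : (2 * q + b - q) * k + q = (k + 1) * q + k * b := by
    rw [show 2 * q + b - q = q + b by omega]
    ring
  have hlhs : (k ^ (k - 1) * k ^ (k - 1) * n ^ (k + 1)) ^ q * (n ^ k) ^ b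
      = k ^ (2 * (k - 1) * q) * n ^ ((k + 1) * q + k * b) := by ring
  rw [show 2 * q + b - 2 * q = b by omega, hexp, hlhs]
  rcases Nat.eq_zero_or_pos q with rfl | hq
  · simp
  · gcongr
    exact Nat.le_mul_of_pos_left k (by omega)

open scoped Classical in
theorem stmt11_general (n x y q k : ℕ) (hn : 1 ≤ n) (hk : 1 ≤ k)
    (E : Finset (Fin x × Fin y))
    (hq : IsLeast {m | ∃ S : Finset (Fin x ⊕ Fin y), IsVertexCover E S ∧ S.card = m} q)
    (P : (Fin x ⊕ Fin y) → Finset (Fin n))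
    (hPdisj : ∀ a b, a ≠ b → Disjoint (P a) (P b)) :
    (Finset.univ.filter fun AB : (Fin k → SubsetsCard n x) × (Fin k → SubsetsCard n y) =>
        Ex (fun g => ∏ j : Fin k,
            RHpart E P g (AB.1 j) (AB.2 j) * RHpart E P g (AB.1 (cyc j)) (AB.2 j)) ≠ 0).card
      ≤ ((x + y) * k) ^ (2 * (k - 1) * q) * n ^ ((x + y - q) * k + q) := by
  have : NeZero k := ⟨by omega⟩
  have : Nonempty (Fin n) := ⟨⟨0, hn⟩⟩
  obtain ⟨S, rfl, m, hm, hmS⟩ := exists_matching_of_isLeast_vertexCover hq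
  set Good := ({p | #(univ.image p.1) + #(univ.image p.2) ≤ k + 1} :
    Finset ((Fin k → Fin n) × (Fin k → Fin n)))
  have h2S : 2 * #S ≤ x + y := by
    simpa using two_mul_card_le_card_of_injective hm fun s => (hmS s).1
  calc _ ≤ #{v : Fin x ⊕ Fin y → Fin k → Fin n | ∀ s : S, (v s, v (m s)) ∈ Good} :=
        card_le_card_of_injOn grid (fun AB hAB => by
          simpa [Good] using fun s =>
            card_image_grid_add_card_image_grid_le hPdisj (mem_filter.1 hAB).2 (hmS s).2)
          grid_injective.injOn
    _ ≤ #Good ^ #S * (n ^ k) ^ (x + y - 2 * #S) := by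
        simpa using card_filter_forall_pair_mem_le hm (fun s => (hmS s).1) Good
    _ ≤ (k ^ (k - 1) * k ^ (k - 1) * n ^ (k + 1)) ^ #S * (n ^ k) ^ (x + y - 2 * #S) := by
        gcongr
        simpa using card_pairs_card_image_add_le (α := Fin n) (k := k) (k + 1)
    _ ≤ _ := pow_mul_pow_le_of_two_mul_le h2S

open scoped Classical in
theorem stmt11 (n x y q k : ℕ) (hn : 1 ≤ n) (hk : 1 ≤ k)
    (E : Finset (Fin x × Fin y))
    (hq : IsLeast {m | ∃ S : Finset (Fin x ⊕ Fin y), IsVertexCover E S ∧ S.card = m} q)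
    (P : (Fin x ⊕ Fin y) → Finset (Fin n))
    (hPdisj : ∀ a b, a ≠ b → Disjoint (P a) (P b))
    (hPcov : ∀ v : Fin n, ∃ a, v ∈ P a) :
    (Finset.univ.filter fun AB : (Fin k → SubsetsCard n x) × (Fin k → SubsetsCard n y) =>
        Ex (fun g => ∏ j : Fin k,
            RHpart E P g (AB.1 j) (AB.2 j) * RHpart E P g (AB.1 (cyc j)) (AB.2 j)) ≠ 0).card
      ≤ ((x + y) * k) ^ (2 * (k - 1) * q) * n ^ ((x + y - q) * k + q) :=
  stmt11_general n x y q k hn hk E hq P hPdisj
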